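/- arXiv:2105.14736 — 2 statements merged into one kernel-verified Lean document; each statement's English description precedes it below -/
import Mathlib

section
/- Let α > 0, λ ∈ ℂ, and t > 0. Then the function s ↦ E_{α,1}(−λ s^α) is differentiable at t with derivative d/dt E_{α,1}(−λ t^α) = −λ t^{α−1} E_{α,α}(−λ t^α). -/
open MeasureTheory Real Set

/-- The two-parameter Mittag-Leffler function `E_{α,β}(z) = ∑ₖ zᵏ / Γ(kα+β)`. -/
noncomputable def mittagLeffler (α β : ℝ) (z : ℂ) : ℂ :=
  ∑' k : ℕ, z ^ k / (Real.Gamma (k * α + β) : ℂ)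

/-!
Since `Γ(kα + 1)` eventually dominates every geometric sequence `Rᵏ`, the series of
`E_{α,1}` may be differentiated termwise on every disc. Shifting the index and using
`Γ((k+1)α + 1) = (k+1)α · Γ(kα + α)` gives `E_{α,1}' = E_{α,α} / α` on all of `ℂ`; the chain rule
with `d/ds (-λ sᵅ) = -λ α sᵅ⁻¹` finishes the proof.
-/

open Filter

namespace Real

theorem eventually_pow_le_Gamma_mul_add_one {α : ℝ} (hα : 0 < α) {R : ℝ} (hR : 1 ≤ R) :
    ∀ᶠ k : ℕ in atTop, R ^ k ≤ Gamma (k * α + 1) := by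
  set S := R ^ (2 / α)
  have hS : ∀ᶠ m : ℕ in atTop, S ^ m ≤ m.factorial := by
    filter_upwards [(Real.summable_pow_div_factorial S).tendsto_atTop_zero.eventually
      (gt_mem_nhds one_pos)] with m hm
    exact ((div_lt_one (by positivity)).mp hm).le
  have hkα : Tendsto (fun k : ℕ => (k : ℝ) * α) atTop atTop :=
    tendsto_natCast_atTop_atTop.atTop_mul_const hα
  filter_upwards [(tendsto_nat_floor_atTop.comp hkα).eventually hS,
    hkα.eventually_ge_atTop 2] with k hSn hk2
  set n := ⌊(k : ℝ) * α⌋₊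
  have hn : (k : ℝ) * α < n + 1 := Nat.lt_floor_add_one _
  have hn2 : (2 : ℝ) ≤ n := by exact_mod_cast Nat.le_floor (by exact_mod_cast hk2)
  calc R ^ k = R ^ (k : ℝ) := (rpow_natCast R k).symm
    _ ≤ R ^ (2 / α * n) := by
      refine rpow_le_rpow_of_exponent_le hR ?_
      rw [div_mul_eq_mul_div, le_div_iff₀ hα]
      linarith
    _ = S ^ n := by rw [rpow_mul (by linarith), rpow_natCast]
    _ ≤ n.factorial := hSn
    _ = Gamma (n + 1) := (Gamma_nat_eq_factorial n).symm
    _ ≤ Gamma (k * α + 1) :=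
      Gamma_strictMonoOn_Ici.monotoneOn (by simp; linarith) (by simp; linarith)
        (by linarith [Nat.floor_le (by linarith : (0 : ℝ) ≤ k * α)])

theorem summable_succ_mul_pow_div_Gamma {α : ℝ} (hα : 0 < α) {x : ℝ} (hx : 0 ≤ x) :
    Summable fun k : ℕ => ((k : ℝ) + 1) * x ^ k / Gamma (k * α + 1) := by
  have hgeom : Summable fun k : ℕ => ((k : ℝ) + 1) * (1 / 2) ^ k := by
    simpa [add_mul] using (summable_pow_mul_geometric_of_norm_lt_one 1
      (by norm_num : ‖(1 / 2 : ℝ)‖ < 1)).add (summable_geometric_two)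
  refine .of_norm_bounded_eventually_nat hgeom ?_
  filter_upwards [eventually_pow_le_Gamma_mul_add_one hα (by linarith : 1 ≤ 2 * x + 1)]
    with k hk
  rw [Real.norm_of_nonneg (by positivity), mul_div_assoc]
  gcongr
  calc x ^ k / Gamma (k * α + 1) ≤ x ^ k / (2 * x + 1) ^ k := by gcongr
    _ = (x / (2 * x + 1)) ^ k := (div_pow _ _ _).symm
    _ ≤ (1 / 2) ^ k := by
      refine pow_le_pow_left₀ (by positivity) ?_ k
      rw [div_le_div_iff₀ (by linarith) two_pos]
      linarith

theorem Gamma_succ_mul_add_one {α : ℝ} (hα : 0 < α) (k : ℕ) :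
    Gamma ((k + 1 : ℕ) * α + 1) = (k + 1) * α * Gamma (k * α + α) := by
  rw [show ((k + 1 : ℕ) : ℝ) * α + 1 = (k * α + α) + 1 by push_cast; ring,
    Gamma_add_one (by positivity)]
  ring

end Real

theorem tsum_natCast_mul_pow_sub_one_div_Gamma {α : ℝ} (hα : 0 < α) {z : ℂ}
    (hs : Summable fun k : ℕ => (k : ℂ) * z ^ (k - 1) / (Gamma (k * α + 1) : ℂ)) :
    ∑' k : ℕ, (k : ℂ) * z ^ (k - 1) / (Gamma (k * α + 1) : ℂ) = mittagLeffler α α z / α := by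
  rw [hs.tsum_eq_zero_add, mittagLeffler, ← tsum_div_const]
  simp only [CharP.cast_eq_zero, zero_mul, zero_div, zero_add, add_tsub_cancel_right]
  refine tsum_congr fun k => ?_
  have hΓ : (Gamma (k * α + α) : ℂ) ≠ 0 := by
    exact_mod_cast (Gamma_pos_of_pos (by positivity)).ne'
  have hα' : (α : ℂ) ≠ 0 := by exact_mod_cast hα.ne'
  rw [Gamma_succ_mul_add_one hα]
  push_cast
  field_simp

theorem hasDerivAt_mittagLeffler_one {α : ℝ} (hα : 0 < α) (z : ℂ) :
    HasDerivAt (mittagLeffler α 1) (mittagLeffler α α z / α) z := by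
  set r := ‖z‖ + 1
  have hΓ : ∀ k : ℕ, 0 < Gamma (k * α + 1) := fun k => Gamma_pos_of_pos (by positivity)
  have hbound : ∀ (k : ℕ) (w : ℂ), w ∈ Metric.ball 0 r →
      ‖(k : ℂ) * w ^ (k - 1) / (Gamma (k * α + 1) : ℂ)‖ ≤
        ((k : ℝ) + 1) * r ^ k / Gamma (k * α + 1) := by
    intro k w hw
    rw [mem_ball_zero_iff] at hw
    rw [norm_div, norm_mul, norm_pow, Complex.norm_real, Complex.norm_natCast,
      Real.norm_of_nonneg (hΓ k).le]
    gcongr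
    · linarith
    calc ‖w‖ ^ (k - 1) ≤ r ^ (k - 1) := by gcongr
      _ ≤ r ^ k := pow_le_pow_right₀ (by simp [r]) (Nat.sub_le k 1)
  have hu := summable_succ_mul_pow_div_Gamma hα (by positivity : 0 ≤ r)
  have hz : z ∈ Metric.ball 0 r := mem_ball_zero_iff.mpr (lt_add_one _)
  rw [← tsum_natCast_mul_pow_sub_one_div_Gamma hα (.of_norm_bounded hu fun k => hbound k z hz)]
  exact hasDerivAt_tsum_of_isPreconnected hu Metric.isOpen_ball
    (convex_ball (0 : ℂ) r).isPreconnected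
    (fun k w _ => (hasDerivAt_pow k w).div_const (Gamma (k * α + 1) : ℂ)) hbound
    (Metric.mem_ball_self (by positivity))
    (hasSum_single 0 fun k hk => by simp [zero_pow hk]).summable hz

theorem stmt4 (α : ℝ) (lam : ℂ) (t : ℝ) (hα : 0 < α) (ht : 0 < t) :
    HasDerivAt (fun s : ℝ => mittagLeffler α 1 (-lam * ((s ^ α : ℝ) : ℂ)))
      (-lam * ((t ^ (α - 1) : ℝ) : ℂ) * mittagLeffler α α (-lam * ((t ^ α : ℝ) : ℂ))) t := by
  have hinner : HasDerivAt (fun s : ℝ => -lam * ((s ^ α : ℝ) : ℂ))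
      (-lam * ((α * t ^ (α - 1) : ℝ) : ℂ)) t :=
    (hasDerivAt_rpow_const (Or.inl ht.ne')).ofReal_comp.const_mul (-lam)
  refine ((hasDerivAt_mittagLeffler_one hα _).comp t hinner).congr_deriv ?_
  have hα' : (α : ℂ) ≠ 0 := by exact_mod_cast hα.ne'
  push_cast
  field_simp
end

section
/- Let α ∈ (0,1), λ > 0, and t > 0. Then (1/Γ(1−α)) ∫₀^t η^{α−1} E_{α,α}(−λ η^α) (t−η)^{−α} dη = E_{α,1}(−λ t^α). -/
/-!
Expanding `E_{α,β}` into its power series, the integral of `η^(β-1) E_{α,β}(z η^α)` against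
`(t-η)^(γ-1)` splits into Beta integrals
`∫₀ᵗ η^(kα+β-1) (t-η)^(γ-1) dη = t^(kα+β+γ-1) Γ(kα+β) Γ(γ) / Γ(kα+β+γ)`;
the factor `Γ(kα+β)` cancels and the series reassembles into `Γ(γ) t^(β+γ-1) E_{α,β+γ}(z t^α)`.
Integrating termwise is legitimate because the same computation at `‖z‖` gives a convergent series:
`∑ xᵏ / Γ(kα+β)` converges by the ratio test, since log-convexity of `Γ` gives
`Γ(s+α) ≥ (s-1)^α Γ(s)`. The theorem is the case `β = α`, `γ = 1 - α`, `z = -λ`.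
-/

open MeasureTheory Real Set

open Filter

theorem Real.rpow_mul_Gamma_le_Gamma_add {s a : ℝ} (hs : 1 < s) (ha : 0 < a) :
    (s - 1) ^ a * Gamma s ≤ Gamma (s + a) := by
  have hslope := convexOn_log_Gamma.slope_mono_adjacent (x := s - 1) (y := s) (z := s + a)
    (by rw [mem_Ioi]; linarith) (by rw [mem_Ioi]; linarith) (by linarith) (by linarith)
  have hstep : log (Gamma s) - log (Gamma (s - 1)) = log (s - 1) := by
    rw [← log_div (Gamma_pos_of_pos (by linarith)).ne' (Gamma_pos_of_pos (by linarith)).ne',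
      ← sub_add_cancel s 1, Gamma_add_one (by linarith), add_sub_cancel_right,
      mul_div_cancel_right₀ _ (Gamma_pos_of_pos (by linarith)).ne']
  simp only [Function.comp, sub_sub_cancel, div_one, add_sub_cancel_left, hstep,
    le_div_iff₀ ha] at hslope
  rw [← log_le_log_iff (by positivity) (Gamma_pos_of_pos (by linarith)),
    log_mul (by positivity) (Gamma_pos_of_pos (by linarith)).ne', log_rpow (by linarith)]
  linarith

theorem Real.summable_pow_div_Gamma_mul_add {α : ℝ} (hα : 0 < α) (β x : ℝ) :
    Summable fun k : ℕ => x ^ k / Gamma (k * α + β) := by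
  have hlinear : Tendsto (fun k : ℕ => k * α + β - 1) atTop atTop :=
    tendsto_atTop_add_const_right _ _ <| tendsto_atTop_add_const_right _ _ <|
      tendsto_natCast_atTop_atTop.atTop_mul_const hα
  refine summable_of_ratio_norm_eventually_le (r := 1 / 2) (by norm_num) ?_
  filter_upwards [hlinear.eventually_gt_atTop 0,
    ((tendsto_rpow_atTop hα).comp hlinear).eventually_ge_atTop (2 * |x|)] with k hk hkx
  simp only [norm_div, norm_pow, norm_eq_abs, Nat.cast_succ, add_mul, one_mul,
    add_right_comm _ α β, Function.comp_apply] at hk hkx ⊢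
  set s := k * α + β
  have hp : 0 < (s - 1) ^ α := rpow_pos_of_pos hk α
  have hΓ : 0 < Gamma s := Gamma_pos_of_pos (by linarith)
  have hΓα : (s - 1) ^ α * Gamma s ≤ Gamma (s + α) :=
    rpow_mul_Gamma_le_Gamma_add (by linarith) hα
  rw [abs_of_pos hΓ, abs_of_pos ((mul_pos hp hΓ).trans_le hΓα)]
  calc |x| ^ (k + 1) / Gamma (s + α) ≤ |x| ^ (k + 1) / ((s - 1) ^ α * Gamma s) := by gcongr
    _ = |x| / (s - 1) ^ α * (|x| ^ k / Gamma s) := by ring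
    _ ≤ 1 / 2 * (|x| ^ k / Gamma s) := by
      refine mul_le_mul_of_nonneg_right ?_ (by positivity)
      rw [div_le_iff₀ hp]
      linarith

theorem integral_rpow_mul_rpow_sub {a b t : ℝ} (ha : 0 < a) (hb : 0 < b) (ht : 0 < t) :
    ∫ η in 0..t, η ^ (a - 1) * (t - η) ^ (b - 1) =
      t ^ (a + b - 1) * (Gamma a * Gamma b / Gamma (a + b)) := by
  apply Complex.ofReal_injective
  have hcpow : EqOn (fun η : ℝ => ((η ^ (a - 1) * (t - η) ^ (b - 1) : ℝ) : ℂ))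
      (fun η : ℝ => (η : ℂ) ^ ((a : ℂ) - 1) * ((t : ℂ) - η) ^ ((b : ℂ) - 1)) (uIcc 0 t) := by
    intro η hη
    rw [uIcc_of_le ht.le] at hη
    push_cast [Complex.ofReal_cpow hη.1, Complex.ofReal_cpow (sub_nonneg.2 hη.2)]
    rfl
  rw [← intervalIntegral.integral_ofReal, intervalIntegral.integral_congr hcpow,
    Complex.betaIntegral_scaled _ _ ht,
    Complex.betaIntegral_eq_Gamma_mul_div _ _ (by simpa) (by simpa)]
  push_cast [Complex.ofReal_cpow ht.le, ← Complex.Gamma_ofReal]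
  rfl

theorem intervalIntegrable_rpow_mul_rpow_sub {a b t : ℝ} (ha : 0 < a) (hb : 0 < b) (ht : 0 < t) :
    IntervalIntegrable (fun η => η ^ (a - 1) * (t - η) ^ (b - 1)) volume 0 t :=
  intervalIntegral.intervalIntegrable_of_integral_ne_zero <| by
    rw [integral_rpow_mul_rpow_sub ha hb ht]; positivity

theorem integral_tsum_mul_ofReal {X : Type*} [MeasurableSpace X] {μ : Measure X} {c : ℕ → ℂ}
    {φ : ℕ → X → ℝ} (hφ : ∀ k, 0 ≤ᵐ[μ] φ k) (hint : ∀ k, Integrable (φ k) μ)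
    (hsum : Summable fun k => ‖c k‖ * ∫ x, φ k x ∂μ) :
    ∫ x, ∑' k, c k * φ k x ∂μ = ∑' k, c k * ∫ x, φ k x ∂μ := by
  have hnorm : ∀ k, ∫ x, ‖c k * φ k x‖ ∂μ = ‖c k‖ * ∫ x, φ k x ∂μ := fun k => by
    rw [← integral_const_mul]
    refine integral_congr_ae ?_
    filter_upwards [hφ k] with x hx
    rw [norm_mul, Complex.norm_real, norm_eq_abs, abs_of_nonneg hx]
  rw [← integral_tsum_of_summable_integral_norm (F := fun k x => c k * (φ k x : ℂ))
    (fun k => (hint k).ofReal.const_mul (c k)) (hsum.congr fun k => (hnorm k).symm)]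
  simp only [integral_const_mul, integral_complex_ofReal]

section FractionalIntegral

variable {α β γ t : ℝ}

theorem integral_rpow_mul_rpow_sub_div_Gamma (hα : 0 < α) (hβ : 0 < β) (hγ : 0 < γ)
    (ht : 0 < t) (k : ℕ) :
    ∫ η in Ioc 0 t, η ^ (k * α + β - 1) * (t - η) ^ (γ - 1) / Gamma (k * α + β) =
      Gamma γ * t ^ (β + γ - 1) * ((t ^ α) ^ k / Gamma (k * α + (β + γ))) := by
  have hΓ : Gamma (k * α + β) ≠ 0 := (Gamma_pos_of_pos (by positivity)).ne'
  rw [integral_div, ← intervalIntegral.integral_of_le ht.le,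
    integral_rpow_mul_rpow_sub (by positivity) hγ ht, ← rpow_mul_natCast ht.le,
    show k * α + β + γ - 1 = β + γ - 1 + α * k by ring, rpow_add ht, add_assoc]
  field_simp

theorem rpow_mul_mittagLeffler_mul_rpow_eq_tsum {η : ℝ} (hη : 0 < η) (z : ℂ) :
    ((η ^ (β - 1) : ℝ) : ℂ) * mittagLeffler α β (z * ((η ^ α : ℝ) : ℂ)) *
        (((t - η) ^ (γ - 1) : ℝ) : ℂ) =
      ∑' k : ℕ,
        z ^ k * ((η ^ (k * α + β - 1) * (t - η) ^ (γ - 1) / Gamma (k * α + β) : ℝ) : ℂ) := by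
  rw [mittagLeffler, ← tsum_mul_left, ← tsum_mul_right]
  refine tsum_congr fun k => ?_
  have hpow : η ^ (k * α + β - 1) = η ^ (β - 1) * (η ^ α) ^ k := by
    rw [← rpow_mul_natCast hη.le, ← rpow_add hη]
    ring_nf
  push_cast [hpow]
  ring

theorem integral_rpow_mul_mittagLeffler_mul_rpow_sub (hα : 0 < α) (hβ : 0 < β) (hγ : 0 < γ)
    (ht : 0 < t) (z : ℂ) :
    ∫ η in (0 : ℝ)..t, ((η ^ (β - 1) : ℝ) : ℂ) * mittagLeffler α β (z * ((η ^ α : ℝ) : ℂ)) *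
        (((t - η) ^ (γ - 1) : ℝ) : ℂ) =
      ((Gamma γ * t ^ (β + γ - 1) : ℝ) : ℂ) *
        mittagLeffler α (β + γ) (z * ((t ^ α : ℝ) : ℂ)) := by
  have hnonneg : ∀ k : ℕ, 0 ≤ᵐ[volume.restrict (Ioc 0 t)]
      fun η => η ^ (k * α + β - 1) * (t - η) ^ (γ - 1) / Gamma (k * α + β) := fun k => by
    filter_upwards [ae_restrict_mem measurableSet_Ioc] with η ⟨hη, hηt⟩
    have := sub_nonneg.2 hηt
    positivity
  have hint : ∀ k : ℕ, IntegrableOn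
      (fun η => η ^ (k * α + β - 1) * (t - η) ^ (γ - 1) / Gamma (k * α + β)) (Ioc 0 t) :=
    fun k => ((intervalIntegrable_rpow_mul_rpow_sub (by positivity) hγ ht).div_const _).1
  have hsum := (Real.summable_pow_div_Gamma_mul_add hα (β + γ) (‖z‖ * t ^ α)).mul_left
    (Gamma γ * t ^ (β + γ - 1))
  rw [intervalIntegral.integral_of_le ht.le, setIntegral_congr_fun measurableSet_Ioc
      fun η hη => rpow_mul_mittagLeffler_mul_rpow_eq_tsum hη.1 z,
    integral_tsum_mul_ofReal hnonneg hint (hsum.congr fun k => ?_)]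
  · simp only [integral_rpow_mul_rpow_sub_div_Gamma hα hβ hγ ht, mittagLeffler,
      ← tsum_mul_left]
    refine tsum_congr fun k => ?_
    push_cast
    ring
  rw [norm_pow, integral_rpow_mul_rpow_sub_div_Gamma hα hβ hγ ht]
  ring

end FractionalIntegral

theorem stmt6_general (α lam t : ℝ) (hα : α ∈ Set.Ioo (0:ℝ) 1) (ht : 0 < t) :
    ((1 / Real.Gamma (1 - α) : ℝ) : ℂ) *
        ∫ η in (0:ℝ)..t, ((η ^ (α - 1) : ℝ) : ℂ) *
          mittagLeffler α α (-(lam : ℂ) * ((η ^ α : ℝ) : ℂ)) * (((t - η) ^ (-α) : ℝ) : ℂ)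
      = mittagLeffler α 1 (-(lam : ℂ) * ((t ^ α : ℝ) : ℂ)) := by
  obtain ⟨hα0, hα1⟩ := hα
  have hΓ : Gamma (1 - α) ≠ 0 := (Gamma_pos_of_pos (sub_pos.2 hα1)).ne'
  have h :=
    integral_rpow_mul_mittagLeffler_mul_rpow_sub hα0 hα0 (sub_pos.2 hα1) ht (-(lam : ℂ))
  rw [sub_sub_cancel_left, add_sub_cancel, sub_self, rpow_zero, mul_one] at h
  rw [h, ← mul_assoc, ← Complex.ofReal_mul, one_div_mul_cancel hΓ, Complex.ofReal_one, one_mul]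

theorem stmt6 (α lam t : ℝ) (hα : α ∈ Set.Ioo (0:ℝ) 1) (hlam : 0 < lam) (ht : 0 < t) :
    ((1 / Real.Gamma (1 - α) : ℝ) : ℂ) *
        ∫ η in (0:ℝ)..t, ((η ^ (α - 1) : ℝ) : ℂ) *
          mittagLeffler α α (-(lam : ℂ) * ((η ^ α : ℝ) : ℂ)) * (((t - η) ^ (-α) : ℝ) : ℂ)
      = mittagLeffler α 1 (-(lam : ℂ) * ((t ^ α : ℝ) : ℂ)) :=
  stmt6_general α lam t hα ht
end
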